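/- arXiv:2605.01071 — 6 statements merged into one kernel-verified Lean document; each statement's English description precedes it below -/
import Mathlib

section
/- The subspace Δ(M) of K[x_1,...,x_n], consisting of polynomials p such that for each i the finite difference p(x - M_i) - p(x) does not depend on x_i, is a graded subspace: if p ∈ Δ(M), then every homogeneous component of p lies in Δ(M). -/
/-!
The condition `p ∈ Δ(M)` says that each `∂ᵢ p` is invariant under the translation
`x ↦ x - Mᵢ`. In characteristic zero a polynomial `q` is invariant under translation by `m`
exactly when its directional derivative `D_m q = ∑ⱼ mⱼ ∂ⱼ q` vanishes: the polynomial
`t ↦ q(x - t m)` takes the value `q` at every natural number `t`, hence is constant, and its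
`t`-derivative is `-(D_m q)(x - t m)`. So `p ∈ Δ(M)` iff `D_{Mᵢ} ∂ᵢ p = 0` for all `i`, and
since `∂ᵢ` and `D_m` both lower the degree by exactly one, this condition passes to every
homogeneous component of `p`.
-/

namespace MvPolynomial

variable {R σ : Type*} [CommRing R]

noncomputable def translate (m : σ → R) : MvPolynomial σ R →ₐ[R] MvPolynomial σ R :=
  aeval fun j => X j - C (m j)

theorem translate_zero : translate (0 : σ → R) = AlgHom.id R _ := by
  ext j; simp [translate]

theorem translate_add (m m' : σ → R) :
    translate (m + m') = (translate m).comp (translate m') := by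
  ext j; simp [translate, sub_sub]

theorem translate_nsmul_apply_eq_self {m : σ → R} {q : MvPolynomial σ R}
    (hq : translate m q = q) (k : ℕ) : translate (k • m) q = q := by
  induction k with
  | zero => simp [translate_zero]
  | succ k ih => rw [succ_nsmul', translate_add, AlgHom.comp_apply, ih, hq]

theorem pderiv_translate (m : σ → R) (i : σ) (q : MvPolynomial σ R) :
    pderiv i (translate m q) = translate m (pderiv i q) := by
  induction q using MvPolynomial.induction_on with
  | C a => simp [translate]
  | add p q hp hq => simp only [map_add, hp, hq]
  | mul_X p j hp =>
    simp only [map_mul, Derivation.leibniz, hp, smul_eq_mul, map_add]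
    by_cases hji : j = i
    · subst hji; simp [translate]
    · simp [translate, pderiv_X_of_ne hji]

theorem homogeneousComponent_pderiv (e : ℕ) (i : σ) (q : MvPolynomial σ R) :
    homogeneousComponent e (pderiv i q) = pderiv i (homogeneousComponent (e + 1) q) := by
  induction q using MvPolynomial.induction_on' with
  | add p q hp hq => simp only [map_add, hp, hq]
  | monomial s a =>
    have hs := isHomogeneous_monomial a (rfl : s.degree = s.degree)
    rw [homogeneousComponent_of_mem hs, homogeneousComponent_of_mem hs.pderiv]
    split_ifs with h₁ h₂ h₂
    · rfl
    · obtain rfl : s = 0 := (Finsupp.degree_eq_zero_iff s).mp (by omega)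
      simp
    · omega
    · simp

/-- `q(x - t m)` as a polynomial in `t`. -/
noncomputable def translateAlong (m : σ → R) :
    MvPolynomial σ R →ₐ[R] Polynomial (MvPolynomial σ R) :=
  aeval fun j => Polynomial.C (X j) - Polynomial.X * Polynomial.C (C (m j))

theorem eval_translateAlong (m : σ → R) (c : R) (q : MvPolynomial σ R) :
    (translateAlong m q).eval (C c) = translate (c • m) q := by
  induction q using MvPolynomial.induction_on with
  | C a => simp [translateAlong, translate]
  | add p q hp hq => simp only [map_add, Polynomial.eval_add, hp, hq]
  | mul_X p j hp =>
    rw [map_mul, Polynomial.eval_mul, hp, map_mul]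
    simp [translateAlong, translate, mul_comm (C (m j))]

theorem translateAlong_eq_C_of_translate_eq_self [IsDomain R] [CharZero R] {m : σ → R}
    {q : MvPolynomial σ R} (hq : translate m q = q) : translateAlong m q = Polynomial.C q := by
  refine sub_eq_zero.mp (Polynomial.eq_zero_of_infinite_isRoot _ ?_)
  refine Set.infinite_of_injective_forall_mem (f := fun k : ℕ => C (k : R)) ?_ fun k => ?_
  · exact fun a b hab => Nat.cast_injective (C_injective σ R hab)
  · rw [Set.mem_ofPred_eq, Polynomial.IsRoot.def, Polynomial.eval_sub, Polynomial.eval_C,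
      eval_translateAlong, Nat.cast_smul_eq_nsmul, translate_nsmul_apply_eq_self hq, sub_self]

section Fintype

variable [Fintype σ]

noncomputable def dirDeriv (m : σ → R) : Derivation R (MvPolynomial σ R) (MvPolynomial σ R) :=
  ∑ j, m j • pderiv j

theorem dirDeriv_apply (m : σ → R) (q : MvPolynomial σ R) :
    dirDeriv m q = ∑ j, m j • pderiv j q := by
  rw [dirDeriv, ← Derivation.coeFnAddMonoidHom_apply, map_sum, Finset.sum_apply]
  rfl

theorem dirDeriv_X (m : σ → R) (j : σ) : dirDeriv m (X j) = C (m j) := by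
  classical
  simp [dirDeriv_apply, pderiv_X, Pi.single_apply, smul_eq_C_mul]

theorem homogeneousComponent_dirDeriv (e : ℕ) (m : σ → R) (q : MvPolynomial σ R) :
    homogeneousComponent e (dirDeriv m q) = dirDeriv m (homogeneousComponent (e + 1) q) := by
  simp [dirDeriv_apply, map_sum, homogeneousComponent_pderiv]

theorem dirDeriv_homogeneousComponent_eq_zero {m : σ → R} {q : MvPolynomial σ R}
    (h : dirDeriv m q = 0) (e : ℕ) : dirDeriv m (homogeneousComponent e q) = 0 := by
  cases e with
  | zero => simp [homogeneousComponent_zero]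
  | succ e => rw [← homogeneousComponent_dirDeriv, h, map_zero]

theorem derivative_translateAlong (m : σ → R) (q : MvPolynomial σ R) :
    Polynomial.derivative (translateAlong m q) = -translateAlong m (dirDeriv m q) := by
  induction q using MvPolynomial.induction_on with
  | C a => simp [translateAlong]
  | add p q hp hq => simp only [map_add, hp, hq, neg_add]
  | mul_X p j hp =>
    simp only [map_mul, Polynomial.derivative_mul, hp, Derivation.leibniz, dirDeriv_X,
      smul_eq_mul, map_add]
    simp [translateAlong]
    ring

theorem translate_eq_self_iff [IsDomain R] [CharZero R] {m : σ → R} {q : MvPolynomial σ R} :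
    translate m q = q ↔ dirDeriv m q = 0 := by
  have eval_zero (r : MvPolynomial σ R) : (translateAlong m r).eval 0 = r := by
    simpa [translate_zero] using eval_translateAlong m 0 r
  have hderiv := derivative_translateAlong m q
  constructor
  · intro hq
    rw [translateAlong_eq_C_of_translate_eq_self hq, Polynomial.derivative_C, eq_comm,
      neg_eq_zero] at hderiv
    simpa [hderiv] using (eval_zero (dirDeriv m q)).symm
  · intro hD
    rw [hD, map_zero, neg_zero] at hderiv
    calc translate m q = (translateAlong m q).eval (C 1) := by rw [eval_translateAlong, one_smul]
      _ = (translateAlong m q).eval 0 := by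
        rw [Polynomial.eq_C_of_derivative_eq_zero hderiv]; simp
      _ = q := eval_zero q

theorem pderiv_translate_sub_self_eq_zero_iff [IsDomain R] [CharZero R] {m : σ → R} {i : σ}
    {p : MvPolynomial σ R} : pderiv i (translate m p - p) = 0 ↔ dirDeriv m (pderiv i p) = 0 := by
  rw [map_sub, pderiv_translate, sub_eq_zero, translate_eq_self_iff]

end Fintype

end MvPolynomial

open MvPolynomial

/-- The space `Δ(M)` (polynomials `p` such that for each `i` the finite difference
`p(x - M_i) - p(x)` does not involve `x_i`) is graded: if `p ∈ Δ(M)` then every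
homogeneous component of `p` lies in `Δ(M)`. -/
theorem deltaSpace_graded
    {K : Type*} [Field K] [CharZero K] {n : ℕ}
    (M : Matrix (Fin n) (Fin n) K) (p : MvPolynomial (Fin n) K)
    (h : ∀ i, pderiv i (aeval (fun j => X j - C (M i j)) p - p) = 0) :
    ∀ d, ∀ i, pderiv i (aeval (fun j => X j - C (M i j)) (homogeneousComponent d p)
        - homogeneousComponent d p) = 0 := by
  intro d i
  have hi : dirDeriv (M i) (pderiv i p) = 0 := pderiv_translate_sub_self_eq_zero_iff.mp (h i)
  refine pderiv_translate_sub_self_eq_zero_iff.mpr ?_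
  cases d with
  | zero => simp [homogeneousComponent_zero]
  | succ e => rw [← homogeneousComponent_pderiv]; exact dirDeriv_homogeneousComponent_eq_zero hi e
end

section
/- If a homogeneous polynomial p of degree d lies in Δ(M), then for each i, the directional derivative (M_i · ∇)p equals minus the degree-(d-1) homogeneous component of the finite difference p(x - M_i) - p(x); in particular (M_i · ∇)p is free of x_i. -/
/-!
The degree `d - 1` part of `p(x - c) - p(x)` is the first-order Taylor term `-(c · ∇)p`.
For `d = 1` this is Euler's identity `p = ∑ xⱼ ∂ⱼp`. For larger `d`, by induction both sides
have the same partial derivatives, since `∂ₖ` commutes with the translation and with `c · ∇`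
and lowers homogeneous degrees by one; both have zero constant term, and over a torsion-free
ring a polynomial is determined by its partial derivatives and its constant term.
Membership in `Δ(M)` then passes from `p(x - Mᵢ) - p(x)` to its homogeneous components.
-/

open MvPolynomial

namespace MvPolynomial

variable {σ R : Type*}

section CommSemiring

variable [CommSemiring R]

theorem pderiv_homogeneousComponent_succ (i : σ) (q : MvPolynomial σ R) (k : ℕ) :
    pderiv i (homogeneousComponent (k + 1) q) = homogeneousComponent k (pderiv i q) := by
  ext m
  rw [coeff_pderiv, coeff_homogeneousComponent, coeff_homogeneousComponent, coeff_pderiv,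
    map_add, Finsupp.degree_single]
  split_ifs <;> simp_all

theorem pderiv_homogeneousComponent_eq_zero {i : σ} {q : MvPolynomial σ R} (h : pderiv i q = 0)
    (k : ℕ) : pderiv i (homogeneousComponent k q) = 0 := by
  cases k with
  | zero => rw [homogeneousComponent_zero, pderiv_C]
  | succ k => rw [pderiv_homogeneousComponent_succ, h, map_zero]

theorem isHomogeneous_sum_smul_pderiv [Fintype σ] (c : σ → R) {p : MvPolynomial σ R} {d : ℕ}
    (hp : p.IsHomogeneous d) : (∑ j, c j • pderiv j p).IsHomogeneous (d - 1) :=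
  IsHomogeneous.sum _ _ _ fun j _ => by rw [smul_eq_C_mul]; exact hp.pderiv.C_mul (c j)

end CommSemiring

section CommRing

variable [CommRing R]

theorem pderiv_pderiv_comm (i j : σ) (p : MvPolynomial σ R) :
    pderiv i (pderiv j p) = pderiv j (pderiv i p) := by
  classical
  have h : ⁅pderiv i, pderiv j⁆ = (0 : Derivation R (MvPolynomial σ R) (MvPolynomial σ R)) :=
    derivation_ext fun k => by
      rw [Derivation.commutator_apply]; simp [pderiv_X, Pi.single_apply, apply_ite]
  rw [← sub_eq_zero, ← Derivation.commutator_apply, h, Derivation.zero_apply]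

theorem eq_of_pderiv_eq [IsAddTorsionFree R] {f g : MvPolynomial σ R}
    (hD : ∀ i, pderiv i f = pderiv i g) (hc : coeff 0 f = coeff 0 g) : f = g := by
  refine coe_injective σ R (MvPowerSeries.pderiv.ext (fun i => ?_) ?_)
  · rw [MvPowerSeries.pderiv_coe, MvPowerSeries.pderiv_coe, hD]
  · rw [← MvPowerSeries.coeff_zero_eq_constantCoeff_apply,
      ← MvPowerSeries.coeff_zero_eq_constantCoeff_apply, coeff_coe, coeff_coe, hc]

theorem pderiv_aeval_X_sub_C (c : σ → R) (k : σ) (p : MvPolynomial σ R) :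
    pderiv k (aeval (fun j => X j - C (c j)) p) = aeval (fun j => X j - C (c j)) (pderiv k p) := by
  induction p using MvPolynomial.induction_on with
  | C a => simp
  | add p q hp hq => simp only [map_add, hp, hq]
  | mul_X p j hp =>
    simp only [map_mul, aeval_X, pderiv_mul, hp, map_sub, pderiv_C, sub_zero, map_add]
    rcases eq_or_ne j k with rfl | hjk
    · simp
    · simp [pderiv_X_of_ne hjk]

theorem aeval_X_sub_C_sub_of_isHomogeneous_one [Fintype σ] (c : σ → R) {p : MvPolynomial σ R}
    (hp : p.IsHomogeneous 1) :
    aeval (fun j => X j - C (c j)) p - p = -∑ j, c j • pderiv j p := by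
  have hconst : ∀ j, pderiv j p = C (coeff 0 (pderiv j p)) := fun j =>
    (homogeneousComponent_eq_self hp.pderiv).symm.trans (homogeneousComponent_zero _)
  have euler := hp.sum_X_mul_pderiv
  rw [one_smul] at euler
  conv_lhs => rw [← euler]
  rw [map_sum, ← Finset.sum_sub_distrib, ← Finset.sum_neg_distrib]
  refine Finset.sum_congr rfl fun j _ => ?_
  rw [map_mul, aeval_X, hconst j, aeval_C, algebraMap_eq, smul_eq_C_mul]
  ring

theorem homogeneousComponent_aeval_X_sub_C_sub [IsAddTorsionFree R] [Fintype σ] (c : σ → R)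
    {p : MvPolynomial σ R} {d : ℕ} (hp : p.IsHomogeneous d) :
    homogeneousComponent (d - 1) (aeval (fun j => X j - C (c j)) p - p) =
      -∑ j, c j • pderiv j p := by
  cases d with
  | zero =>
    rw [(homogeneousComponent_eq_self hp).symm.trans (homogeneousComponent_zero _)]
    simp
  | succ d =>
    induction d generalizing p with
    | zero =>
      rw [aeval_X_sub_C_sub_of_isHomogeneous_one c hp,
        homogeneousComponent_eq_self (isHomogeneous_sum_smul_pderiv c hp).neg]
    | succ d ih =>
      refine eq_of_pderiv_eq (fun k => ?_) ?_
      · have ih_k := ih (hp.pderiv (i := k))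
        rw [Nat.add_sub_cancel] at ih_k ⊢
        rw [pderiv_homogeneousComponent_succ, (pderiv k).map_sub, pderiv_aeval_X_sub_C, ih_k]
        simp only [map_neg, map_sum, Derivation.map_smul, pderiv_pderiv_comm k]
      · rw [coeff_homogeneousComponent, if_neg (by simp),
          (isHomogeneous_sum_smul_pderiv c hp).neg.coeff_eq_zero (by simp)]

end CommRing

end MvPolynomial

/-- For a homogeneous `p` of degree `d` in `Δ(M)`, the directional derivative
`(M_i · ∇)p` equals minus the degree-`(d-1)` homogeneous component of the finite
difference `p(x - M_i) - p(x)`; in particular it is free of `x_i`. -/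
theorem directional_derivative_of_homogeneous_mem_deltaSpace
    {K : Type*} [Field K] [CharZero K] {n : ℕ}
    (M : Matrix (Fin n) (Fin n) K) (p : MvPolynomial (Fin n) K) (d : ℕ)
    (hp : p.IsHomogeneous d)
    (hmem : ∀ i, pderiv i (aeval (fun j => X j - C (M i j)) p - p) = 0)
    (i : Fin n) :
    (∑ j, M i j • pderiv j p) =
      - homogeneousComponent (d - 1) (aeval (fun j => X j - C (M i j)) p - p) ∧
    pderiv i (∑ j, M i j • pderiv j p) = 0 := by
  have taylor := homogeneousComponent_aeval_X_sub_C_sub (M i) hp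
  refine ⟨by rw [taylor, neg_neg], ?_⟩
  rw [← neg_neg (∑ j, M i j • pderiv j p), ← taylor, map_neg,
    pderiv_homogeneousComponent_eq_zero (hmem i), neg_zero]
end

section
/- Let M be an n×n matrix over a field K of characteristic zero, and let I_M ⊆ K[y_1,...,y_n] be the ideal generated by y_i L_i for i = 1,...,n, where L_i = Σ_j M_{ij} y_j. Then the affine variety V(I_M) over K equals {0} if and only if every principal minor of M is nonzero. -/
open MvPolynomial

lemma sum_restrict_aux {K : Type*} [Field K] {n : ℕ} (M : Matrix (Fin n) (Fin n) K)
    (J : Finset (Fin n)) (a : Fin n → K) (h0 : ∀ j ∉ J, a j = 0) (i : Fin n) :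
    (∑ j, M i j * a j) = ∑ j : {x // x ∈ J}, M i j.val * a j.val := by
  rw [Finset.sum_coe_sort J (fun j => M i j * a j)]
  exact (Finset.sum_subset J.subset_univ (fun x _ hx => by rw [h0 x hx, mul_zero])).symm

/-- The zero locus of the ideal `I_M = (y_i L_i)` equals `{0}` if and only if every
principal minor of `M` is nonzero. -/
theorem variety_eq_zero_iff_principal_minors_ne_zero
    {K : Type*} [Field K] [CharZero K] {n : ℕ}
    (M : Matrix (Fin n) (Fin n) K) :
    {a : Fin n → K | ∀ i, a i * ∑ j, M i j * a j = 0} = {0} ↔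
    ∀ J : Finset (Fin n), J.Nonempty →
      (M.submatrix (Subtype.val : {x // x ∈ J} → Fin n) Subtype.val).det ≠ 0 := by
  constructor
  · intro h J hJ hdet
    obtain ⟨v, hv, hmv⟩ := Matrix.exists_mulVec_eq_zero_iff.2 hdet
    set a : Fin n → K := fun i => if h : i ∈ J then v ⟨i, h⟩ else 0 with ha
    have h0 : ∀ j ∉ J, a j = 0 := fun j hj => dif_neg hj
    have hmem : a ∈ {a : Fin n → K | ∀ i, a i * ∑ j, M i j * a j = 0} := by
      intro i
      by_cases hi : i ∈ J
      · have : (∑ j, M i j * a j) = 0 := by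
          rw [sum_restrict_aux M J a h0 i]
          have := congrFun hmv ⟨i, hi⟩
          simpa [Matrix.mulVec, dotProduct, ha] using this
        rw [this, mul_zero]
      · rw [h0 i hi, zero_mul]
    rw [h] at hmem
    apply hv
    funext j
    have : a j.val = 0 := congrFun hmem j.val
    simpa [ha, j.property] using this
  · intro h
    ext a
    simp only [Set.mem_setOf_eq, Set.mem_singleton_iff]
    constructor
    · intro ha
      classical
      by_contra hne
      set J : Finset (Fin n) := Finset.univ.filter (fun j => a j ≠ 0) with hJdef
      have h0 : ∀ j ∉ J, a j = 0 := by
        intro j hj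
        by_contra hja
        exact hj (Finset.mem_filter.2 ⟨Finset.mem_univ j, hja⟩)
      have hJ : J.Nonempty := by
        rcases Function.ne_iff.1 hne with ⟨i, hi⟩
        exact ⟨i, Finset.mem_filter.2 ⟨Finset.mem_univ i, by simpa using hi⟩⟩
      apply h J hJ
      rw [← Matrix.exists_mulVec_eq_zero_iff]
      refine ⟨fun j => a j.val, ?_, ?_⟩
      · obtain ⟨i, hi⟩ := hJ
        intro hz
        have := congrFun hz ⟨i, hi⟩
        exact (Finset.mem_filter.1 hi).2 this
      · funext i
        have hi : a i.val ≠ 0 := (Finset.mem_filter.1 i.property).2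
        have := ha i.val
        have hsum : (∑ j, M i.val j * a j) = 0 := by
          rcases mul_eq_zero.1 this with h' | h'
          · exact absurd h' hi
          · exact h'
        rw [sum_restrict_aux M J a h0 i.val] at hsum
        simpa [Matrix.mulVec, dotProduct] using hsum
    · rintro rfl
      intro i
      simp
end

section
/- If some principal minor of an n×n matrix M (over a field K of characteristic zero) vanishes and n > 1, then the quotient ring K[y_1,...,y_n]/I_M is infinite-dimensional over K: there exists a linear form L such that the powers L^k are linearly independent modulo I_M. -/
/-!
A kernel vector of the singular principal submatrix `M_J`, extended by zero, is a point `c ≠ 0`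
with `c i * (M c) i = 0` for every `i`, so the whole line `t ↦ t • c` lies on the variety of
`I_M`. Restricting to this line, `y ↦ t • c`, maps `K[y] ⧸ I_M` to `K[t]` and sends `y_{j₀} ^ k`
to `(c_{j₀} t) ^ k`; for a coordinate with `c_{j₀} ≠ 0` these powers are linearly independent.
-/

open MvPolynomial
open scoped Matrix Polynomial

namespace Matrix

variable {m ι κ R : Type*} [Fintype ι] [Fintype κ]

theorem mulVec_extend_zero [CommSemiring R] (M : Matrix m ι R) {e : κ → ι}
    (he : Function.Injective e) (w : κ → R) :
    M *ᵥ Function.extend e w 0 = M.submatrix id e *ᵥ w := by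
  ext i
  refine (Fintype.sum_of_injective e he _ _ (fun j hj => ?_) fun k => ?_).symm
  · rw [Function.extend_apply' _ _ _ (by simpa using hj), Pi.zero_apply, mul_zero]
  · simp only [submatrix_apply, id, he.extend_apply]

theorem exists_ne_zero_forall_mul_mulVec_eq_zero_of_det_submatrix_eq_zero
    [DecidableEq κ] {K : Type*} [Field K] (M : Matrix ι ι K) {e : κ → ι}
    (he : Function.Injective e) (hdet : (M.submatrix e e).det = 0) :
    ∃ c : ι → K, c ≠ 0 ∧ ∀ i, c i * (M *ᵥ c) i = 0 := by
  obtain ⟨w, hw, hMw⟩ := exists_mulVec_eq_zero_iff.mpr hdet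
  obtain ⟨k, hk⟩ := Function.ne_iff.mp hw
  refine ⟨Function.extend e w 0, Function.ne_iff.mpr ⟨e k, by rwa [he.extend_apply]⟩, fun i => ?_⟩
  by_cases hi : ∃ k, e k = i
  · obtain ⟨k, rfl⟩ := hi
    rw [mulVec_extend_zero M he, show (M.submatrix id e *ᵥ w) (e k) = (M.submatrix e e *ᵥ w) k
      from rfl, hMw, Pi.zero_apply, mul_zero]
  · rw [Function.extend_apply' _ _ _ hi, Pi.zero_apply, zero_mul]

end Matrix

theorem MvPolynomial.span_mul_sum_le_ker_aeval {σ R : Type*} [Fintype σ] [CommSemiring R]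
    (M : Matrix σ σ R) {c : σ → R} (hc : ∀ i, c i * (M *ᵥ c) i = 0) :
    Ideal.span (Set.range fun i => X i * ∑ j, C (M i j) * X j) ≤
      RingHom.ker (aeval fun j => Polynomial.C (c j) * Polynomial.X : MvPolynomial σ R →ₐ[R] _) := by
  rw [Ideal.span_le]
  rintro _ ⟨i, rfl⟩
  have : Polynomial.C (c i) * Polynomial.X *
      ∑ j, Polynomial.C (M i j) * (Polynomial.C (c j) * Polynomial.X) =
      (Polynomial.C (c i * (M *ᵥ c) i) * Polynomial.X ^ 2 : R[X]) := by
    simp only [Matrix.mulVec, dotProduct, map_sum, map_mul, Finset.mul_sum, Finset.sum_mul]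
    exact Finset.sum_congr rfl fun j _ => by ring
  simp [this, hc i]

theorem Polynomial.linearIndependent_C_mul_X_pow_succ {R : Type*} [CommSemiring R] {a : R}
    (ha : IsUnit a) : LinearIndependent R fun k : ℕ => (C a * X) ^ (k + 1) := by
  have hmono := (basisMonomials R).linearIndependent.comp (· + 1) (add_left_injective 1)
  convert hmono.units_smul fun k => ha.unit ^ (k + 1) with k
  simp [mul_pow, coe_basisMonomials, ← C_mul_X_pow_eq_monomial, Units.smul_def, smul_eq_C_mul]

theorem quotient_infinite_dimensional_of_principal_minor_eq_zero_general
    {K : Type*} [Field K] {n : ℕ}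
    (M : Matrix (Fin n) (Fin n) K)
    (hmin : ∃ J : Finset (Fin n), J.Nonempty ∧
      (M.submatrix (Subtype.val : {x // x ∈ J} → Fin n) Subtype.val).det = 0) :
    ¬ Module.Finite K
        (MvPolynomial (Fin n) K ⧸
          (Ideal.span (Set.range fun i : Fin n => X i * ∑ j, C (M i j) * X j) :
            Ideal (MvPolynomial (Fin n) K))) ∧
    ∃ c : Fin n → K,
      LinearIndependent K (fun k : ℕ =>
        Ideal.Quotient.mk
          (Ideal.span (Set.range fun i : Fin n => X i * ∑ j, C (M i j) * X j))
          ((∑ j, C (c j) * X j) ^ (k + 1))) := by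
  obtain ⟨J, -, hJ⟩ := hmin
  obtain ⟨c, hc0, hc⟩ :=
    M.exists_ne_zero_forall_mul_mulVec_eq_zero_of_det_submatrix_eq_zero Subtype.val_injective hJ
  obtain ⟨j₀, hj₀⟩ := Function.ne_iff.mp hc0
  set I : Ideal (MvPolynomial (Fin n) K) :=
    Ideal.span (Set.range fun i : Fin n => X i * ∑ j, C (M i j) * X j)
  have hli : LinearIndependent K fun k : ℕ => Ideal.Quotient.mk I (X j₀ ^ (k + 1)) := by
    let Φ := Ideal.Quotient.liftₐ I _ fun a ha => span_mul_sum_le_ker_aeval M hc ha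
    have hΦ : ∀ p, Φ (Ideal.Quotient.mk I p) =
        aeval (fun j => Polynomial.C (c j) * Polynomial.X) p := fun _ => rfl
    refine .of_comp Φ.toLinearMap ?_
    simpa [Function.comp_def, hΦ] using
      Polynomial.linearIndependent_C_mul_X_pow_succ (isUnit_iff_ne_zero.mpr hj₀)
  refine ⟨fun _ => Module.Finite.not_linearIndependent_of_infinite _ hli, Pi.single j₀ 1, ?_⟩
  simpa [Pi.single_apply] using hli

/-- If some principal minor of `M` vanishes and `n > 1`, the quotient `K[y]/I_M` is
infinite-dimensional: there is a linear form `L` whose powers `L^k` (k ≥ 1) are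
linearly independent modulo `I_M`. -/
theorem quotient_infinite_dimensional_of_principal_minor_eq_zero
    {K : Type*} [Field K] [CharZero K] {n : ℕ} (hn : 1 < n)
    (M : Matrix (Fin n) (Fin n) K)
    (hmin : ∃ J : Finset (Fin n), J.Nonempty ∧
      (M.submatrix (Subtype.val : {x // x ∈ J} → Fin n) Subtype.val).det = 0) :
    ¬ Module.Finite K
        (MvPolynomial (Fin n) K ⧸
          (Ideal.span (Set.range fun i : Fin n => X i * ∑ j, C (M i j) * X j) :
            Ideal (MvPolynomial (Fin n) K))) ∧
    ∃ c : Fin n → K,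
      LinearIndependent K (fun k : ℕ =>
        Ideal.Quotient.mk
          (Ideal.span (Set.range fun i : Fin n => X i * ∑ j, C (M i j) * X j))
          ((∑ j, C (c j) * X j) ^ (k + 1))) :=
  quotient_infinite_dimensional_of_principal_minor_eq_zero_general M hmin
end

section
/- For an n×n matrix M over a field K of characteristic zero, the quotient K[y_1,...,y_n]/I_M is finite-dimensional over K if and only if every principal minor of M is nonzero, where I_M is generated by the quadrics y_i (Σ_j M_{ij} y_j). -/
/-!
If a principal minor `det M_J` vanishes, a kernel vector of `M_J` extended by zero is a point
`y ≠ 0` at which every `y_i L_i` vanishes; then `I_M` vanishes on the whole line `K • y`, and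
evaluation along that line maps `K[y]/I_M` onto `K[t]`.

Conversely, if all principal minors are nonzero, every monomial `y^u` of degree `> n` lies in
`I_M`, by downward induction on its support `J`. Write `y^u = y^v y_i` with `y_i ∣ y^v`. For
`j ∈ J` the generator `y_j L_j` divides `y^v L_j = ∑_k M_jk y^v y_k`, and the terms with `k ∉ J`
have larger support, so `∑_{k ∈ J} M_jk y^v y_k ∈ I_M` for all `j ∈ J`; inverting `M_J` gives
`y^u ∈ I_M`. Thus every `y_i` is nilpotent modulo `I_M` and the quotient is finite-dimensional.
-/

open MvPolynomial Finsupp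
open scoped Matrix Polynomial

noncomputable def quadricIdeal {σ R : Type*} [Fintype σ] [CommSemiring R] (M : Matrix σ σ R) :
    Ideal (MvPolynomial σ R) :=
  Ideal.span (Set.range fun i => X i * ∑ j, C (M i j) * X j)

lemma Submodule.mem_of_forall_sum_smul_mem {R V ι : Type*} [CommRing R] [AddCommGroup V]
    [Module R V] [Fintype ι] [DecidableEq ι] {A : Matrix ι ι R} (hA : IsUnit A.det)
    {p : Submodule R V} {f : ι → V} (h : ∀ j, ∑ k, A j k • f k ∈ p) (k : ι) : f k ∈ p := by
  have : f k = ∑ j, A⁻¹ k j • ∑ l, A j l • f l := by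
    simp_rw [Finset.smul_sum, smul_smul]
    rw [Finset.sum_comm]
    simp_rw [← Finset.sum_smul, ← Matrix.mul_apply, Matrix.nonsing_inv_mul A hA, Matrix.one_apply,
      ite_smul, one_smul, zero_smul, Finset.sum_ite_eq, Finset.mem_univ, if_true]
  rw [this]
  exact p.sum_mem fun j _ => p.smul_mem _ (h j)

lemma Finsupp.exists_two_le_of_card_support_lt_degree {σ : Type*} {u : σ →₀ ℕ}
    (h : u.support.card < u.degree) : ∃ i, 2 ≤ u i := by
  by_contra! hu
  refine h.not_ge ?_
  simpa [degree_apply] using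
    Finset.sum_le_card_nsmul u.support u 1 fun i _ => Nat.le_of_lt_succ (hu i)

lemma MvPolynomial.finite_quotient_of_X_pow_mem {R σ : Type*} [CommRing R] [Finite σ]
    {I : Ideal (MvPolynomial σ R)} {m : ℕ} (hm : 0 < m) (h : ∀ i, X i ^ m ∈ I) :
    Module.Finite R (MvPolynomial σ R ⧸ I) := by
  have hint : ∀ x ∈ Set.range fun i => Ideal.Quotient.mkₐ R I (X i), IsIntegral R x := by
    rintro _ ⟨i, rfl⟩
    refine IsIntegral.of_pow hm ?_
    rw [← map_pow, Ideal.Quotient.mkₐ_eq_mk, Ideal.Quotient.eq_zero_iff_mem.mpr (h i)]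
    exact isIntegral_zero
  have hadj : Algebra.adjoin R (Set.range fun i => Ideal.Quotient.mkₐ R I (X i)) = ⊤ := by
    rw [Set.range_comp', ← AlgHom.map_adjoin, adjoin_range_X, Algebra.map_top,
      AlgHom.range_eq_top]
    exact Ideal.Quotient.mkₐ_surjective R I
  rw [Module.finite_def, ← Algebra.top_toSubmodule, ← hadj]
  exact fg_adjoin_of_finite (Set.finite_range _) hint

lemma MvPolynomial.aeval_smul_X_surjective {K σ : Type*} [Field K] {y : σ → K} (hy : y ≠ 0) :
    Function.Surjective (aeval fun i => y i • Polynomial.X : MvPolynomial σ K →ₐ[K] K[X]) := by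
  obtain ⟨i, hi⟩ := Function.ne_iff.mp hy
  refine fun p => ⟨Polynomial.aeval ((y i)⁻¹ • X i) p, ?_⟩
  rw [← Polynomial.aeval_algHom_apply, map_smul, aeval_X, smul_smul, inv_mul_cancel₀ hi,
    one_smul, Polynomial.aeval_X_left_apply]

lemma not_finite_quotient_of_surjective_of_le_ker {K A : Type*} [Field K] [CommRing A]
    [Algebra K A] {I : Ideal A} {φ : A →ₐ[K] K[X]} (hφ : Function.Surjective φ)
    (hI : I ≤ RingHom.ker φ) : ¬ Module.Finite K (A ⧸ I) := fun _ =>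
  Polynomial.not_finite <| Module.Finite.of_surjective (Ideal.Quotient.liftₐ I φ hI).toLinearMap
    (Ideal.Quotient.lift_surjective_of_surjective I hI hφ)

section quadricIdeal

variable {K σ : Type*} [Field K] [Fintype σ]

lemma Matrix.exists_ne_zero_forall_mul_mulVec_eq_zero [DecidableEq σ] {M : Matrix σ σ K}
    {J : Finset σ} (hJ : (M.submatrix (Subtype.val : J → σ) Subtype.val).det = 0) :
    ∃ y : σ → K, y ≠ 0 ∧ ∀ i, y i * (M *ᵥ y) i = 0 := by
  obtain ⟨v, hv, hMv⟩ := Matrix.exists_mulVec_eq_zero_iff.mpr hJ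
  have hy : ∀ x : J, Subtype.val.extend v 0 x.1 = v x := fun x =>
    Subtype.val_injective.extend_apply _ _ x
  refine ⟨Subtype.val.extend v 0, fun h => hv (funext fun x => by rw [← hy, h]; rfl),
    fun i => ?_⟩
  by_cases hi : i ∈ J
  · have : (M *ᵥ Subtype.val.extend v 0) i = (M.submatrix Subtype.val Subtype.val *ᵥ v) ⟨i, hi⟩ :=
      (Fintype.sum_of_injective Subtype.val Subtype.val_injective _ _
        (fun j hj => by
          rw [Function.extend_apply' _ _ _ (by simpa using hj), Pi.zero_apply, mul_zero])
        (fun x => by rw [hy]; rfl)).symm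
    rw [this, hMv, Pi.zero_apply, mul_zero]
  · rw [Function.extend_apply' _ _ _ (by simpa using hi), Pi.zero_apply, zero_mul]

lemma quadricIdeal_le_ker_aeval_smul_X {M : Matrix σ σ K} {y : σ → K}
    (hy : ∀ i, y i * (M *ᵥ y) i = 0) :
    quadricIdeal M ≤
      RingHom.ker (aeval fun i => y i • Polynomial.X : MvPolynomial σ K →ₐ[K] K[X]) := by
  refine Ideal.span_le.mpr ?_
  rintro _ ⟨i, rfl⟩
  have : aeval (fun i => y i • (Polynomial.X : K[X])) (X i * ∑ j, C (M i j) * X j) =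
      (y i * (M *ᵥ y) i) • Polynomial.X ^ 2 := by
    simp only [map_mul, map_sum, aeval_X, aeval_C, Matrix.mulVec, dotProduct, Finset.mul_sum,
      Finset.sum_smul]
    refine Finset.sum_congr rfl fun j _ => ?_
    simp only [Algebra.smul_def, Polynomial.algebraMap_eq, map_mul]
    ring
  simp [this, hy i]

theorem det_submatrix_ne_zero_of_finite_quotient_quadricIdeal [DecidableEq σ]
    {M : Matrix σ σ K} (hfin : Module.Finite K (MvPolynomial σ K ⧸ quadricIdeal M))
    (J : Finset σ) : (M.submatrix (Subtype.val : J → σ) Subtype.val).det ≠ 0 := fun hJ =>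
  have ⟨_, hy0, hy⟩ := Matrix.exists_ne_zero_forall_mul_mulVec_eq_zero hJ
  not_finite_quotient_of_surjective_of_le_ker (aeval_smul_X_surjective hy0)
    (quadricIdeal_le_ker_aeval_smul_X hy) hfin

lemma sum_smul_monomial_mem_quadricIdeal (M : Matrix σ σ K) {v : σ →₀ ℕ} {j : σ}
    (hj : 1 ≤ v j) : ∑ k, M j k • monomial (v + single k 1) (1 : K) ∈ quadricIdeal M := by
  obtain ⟨w, rfl⟩ : ∃ w, v = w + single j 1 :=
    ⟨v - single j 1, (tsub_add_cancel_of_le (single_le_iff.mpr hj)).symm⟩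
  have : monomial w 1 * (X j * ∑ k, C (M j k) * X k) =
      ∑ k, M j k • monomial (w + single j 1 + single k 1) (1 : K) := by
    simp only [Finset.mul_sum, X, smul_monomial, C_mul_monomial, monomial_mul]
    simp [mul_comm, add_assoc]
  rw [← this]
  exact Ideal.mul_mem_left _ _ (Ideal.subset_span ⟨j, rfl⟩)

theorem monomial_mem_quadricIdeal [DecidableEq σ] {M : Matrix σ σ K}
    (hM : ∀ J : Finset σ, J.Nonempty → (M.submatrix (Subtype.val : J → σ) Subtype.val).det ≠ 0)
    (u : σ →₀ ℕ) (hu : Fintype.card σ < u.degree) : monomial u (1 : K) ∈ quadricIdeal M := by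
  obtain ⟨i, hi⟩ := exists_two_le_of_card_support_lt_degree (hu.trans_le' u.support.card_le_univ)
  obtain ⟨v, hvu⟩ : ∃ v, v + single i 1 = u :=
    ⟨u - single i 1, tsub_add_cancel_of_le (single_le_iff.mpr (one_le_two.trans hi))⟩
  have hv : ∀ j ∈ u.support, 1 ≤ v j := fun j hj => by
    rcases eq_or_ne i j with rfl | hij
    · simp only [← hvu, Finsupp.add_apply, single_eq_same] at hi
      omega
    · simpa [← hvu, single_apply, hij, Nat.one_le_iff_ne_zero] using hj
  have hdeg : ∀ k, (v + single k 1).degree = u.degree := fun k => by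
    rw [← hvu, map_add, map_add, degree_single, degree_single]
  have hsum : ∀ j ∈ u.support,
      ∑ k ∈ u.support, M j k • monomial (v + single k 1) (1 : K) ∈ quadricIdeal M := by
    intro j hj
    have houtside : ∀ k ∉ u.support, monomial (v + single k 1) (1 : K) ∈ quadricIdeal M :=
      fun k hk => monomial_mem_quadricIdeal hM (v + single k 1) (hdeg k ▸ hu)
    have := sum_smul_monomial_mem_quadricIdeal M (hv j hj)
    rw [← Finset.sum_add_sum_compl u.support] at this
    exact (Submodule.add_mem_iff_left _ (Submodule.sum_mem _ fun k hk =>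
      Submodule.smul_of_tower_mem _ _ (houtside k (Finset.mem_compl.mp hk)))).mp this
  have hiu : i ∈ u.support := Finsupp.mem_support_iff.mpr (by omega)
  have := Submodule.mem_of_forall_sum_smul_mem (isUnit_iff_ne_zero.mpr (hM u.support ⟨i, hiu⟩))
    (p := (quadricIdeal M).restrictScalars K)
    (f := fun k : u.support => monomial (v + single k.1 1) (1 : K))
    (fun j => (Finset.sum_coe_sort u.support
      fun k => M j k • monomial (v + single k 1) (1 : K)) ▸ hsum j j.2) ⟨i, hiu⟩
  rwa [← hvu]
termination_by Fintype.card σ - u.support.card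
decreasing_by
  have hsub : u.support ⊂ (v + single k 1).support := by
    refine (Finset.ssubset_iff_of_subset fun l hl => ?_).mpr ⟨k, by simp, hk⟩
    have := hv l hl
    rw [Finsupp.mem_support_iff, Finsupp.add_apply]
    omega
  have := Finset.card_lt_card hsub
  have := (v + single k 1).support.card_le_univ
  omega

theorem finite_quotient_quadricIdeal [DecidableEq σ] {M : Matrix σ σ K}
    (hM : ∀ J : Finset σ, J.Nonempty → (M.submatrix (Subtype.val : J → σ) Subtype.val).det ≠ 0) :
    Module.Finite K (MvPolynomial σ K ⧸ quadricIdeal M) :=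
  finite_quotient_of_X_pow_mem (Nat.succ_pos _) fun i => by
    simpa [X_pow_eq_monomial] using
      monomial_mem_quadricIdeal hM (single i (Fintype.card σ + 1)) (by simp)

end quadricIdeal

theorem quotient_finite_dimensional_iff_principal_minors_ne_zero_general
    {K : Type*} [Field K] {n : ℕ}
    (M : Matrix (Fin n) (Fin n) K) :
    Module.Finite K
        (MvPolynomial (Fin n) K ⧸
          (Ideal.span (Set.range fun i : Fin n => X i * ∑ j, C (M i j) * X j) :
            Ideal (MvPolynomial (Fin n) K))) ↔
    ∀ J : Finset (Fin n), J.Nonempty →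
      (M.submatrix (Subtype.val : {x // x ∈ J} → Fin n) Subtype.val).det ≠ 0 :=
  ⟨fun hfin J _ => det_submatrix_ne_zero_of_finite_quotient_quadricIdeal hfin J,
    finite_quotient_quadricIdeal⟩

/-- `K[y]/I_M` is finite-dimensional over `K` if and only if every principal minor of
`M` is nonzero, where `I_M = (y_i ∑_j M_{ij} y_j : i ∈ [n])`. -/
theorem quotient_finite_dimensional_iff_principal_minors_ne_zero
    {K : Type*} [Field K] [CharZero K] {n : ℕ}
    (M : Matrix (Fin n) (Fin n) K) :
    Module.Finite K
        (MvPolynomial (Fin n) K ⧸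
          (Ideal.span (Set.range fun i : Fin n => X i * ∑ j, C (M i j) * X j) :
            Ideal (MvPolynomial (Fin n) K))) ↔
    ∀ J : Finset (Fin n), J.Nonempty →
      (M.submatrix (Subtype.val : {x // x ∈ J} → Fin n) Subtype.val).det ≠ 0 :=
  quotient_finite_dimensional_iff_principal_minors_ne_zero_general M
end

section
/- If all principal minors of M ∈ M_n(K) are nonzero, then the n quadrics y_1 L_1, ..., y_n L_n (with L_i = Σ_j M_{ij} y_j) form a regular sequence in K[y_1,...,y_n]. -/
open MvPolynomial

namespace QuadReg

variable {K : Type*} [Field K] {n : ℕ}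

noncomputable def Lf (M : Matrix (Fin n) (Fin n) K) (k : Fin n) : MvPolynomial (Fin n) K :=
  ∑ j, C (M k j) * X j

noncomputable def qf (M : Matrix (Fin n) (Fin n) K) (k : Fin n) : MvPolynomial (Fin n) K :=
  X k * Lf M k

/-- substitution along a matrix -/
noncomputable def Φ (B : Matrix (Fin n) (Fin n) K) :
    MvPolynomial (Fin n) K →ₐ[K] MvPolynomial (Fin n) K :=
  aeval (fun i => ∑ j, C (B i j) * X j)

lemma Φ_X (B : Matrix (Fin n) (Fin n) K) (i : Fin n) :
    Φ B (X i) = ∑ j, C (B i j) * X j := aeval_X _ i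

lemma Φ_comp (B B' : Matrix (Fin n) (Fin n) K) : (Φ B).comp (Φ B') = Φ (B' * B) := by
  apply MvPolynomial.algHom_ext
  intro i
  have hC : ∀ a : K, Φ B (C a) = C a := by
    intro a
    simpa [MvPolynomial.algebraMap_eq] using (Φ B).commutes a
  simp only [AlgHom.comp_apply, Φ_X, map_sum, map_mul, hC]
  calc ∑ j, C (B' i j) * ∑ k, C (B j k) * X k
      = ∑ j, ∑ k, C (B' i j) * (C (B j k) * X k) := by
        simp only [Finset.mul_sum]
    _ = ∑ k, C ((B' * B) i k) * X k := by
        rw [Finset.sum_comm]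
        refine Finset.sum_congr rfl fun k _ => ?_
        rw [Matrix.mul_apply, map_sum, Finset.sum_mul]
        refine Finset.sum_congr rfl fun j _ => ?_
        rw [map_mul, mul_assoc]

lemma Φ_one : Φ (1 : Matrix (Fin n) (Fin n) K) = AlgHom.id K _ := by
  apply MvPolynomial.algHom_ext
  intro i
  simp only [Φ_X, AlgHom.id_apply, Matrix.one_apply]
  rw [Finset.sum_eq_single i] <;> simp +contextual [eq_comm]

/-- substitution equivalence for invertible matrix -/
noncomputable def Ψ (B : Matrix (Fin n) (Fin n) K) (hB : IsUnit B.det) :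
    MvPolynomial (Fin n) K ≃ₐ[K] MvPolynomial (Fin n) K :=
  AlgEquiv.ofAlgHom (Φ B) (Φ B⁻¹)
    (by rw [Φ_comp, Matrix.nonsing_inv_mul _ hB, Φ_one])
    (by rw [Φ_comp, Matrix.mul_nonsing_inv _ hB, Φ_one])

lemma Ψ_apply (B : Matrix (Fin n) (Fin n) K) (hB : IsUnit B.det) (p) :
    Ψ B hB p = Φ B p := rfl

/-- matrix whose rows in `T` are rows of `M`, others are unit vectors -/
noncomputable def BT (M : Matrix (Fin n) (Fin n) K) (T : Finset (Fin n)) :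
    Matrix (Fin n) (Fin n) K :=
  fun m => if m ∈ T then M m else Pi.single m 1

lemma BT_det (M : Matrix (Fin n) (Fin n) K)
    (hmin : ∀ J : Finset (Fin n), J.Nonempty →
      (M.submatrix (Subtype.val : {x // x ∈ J} → Fin n) Subtype.val).det ≠ 0)
    (T : Finset (Fin n)) : IsUnit (BT M T).det := by
  classical
  rw [isUnit_iff_ne_zero, Ne, ← Matrix.exists_vecMul_eq_zero_iff]
  rintro ⟨v, hv0, hv⟩
  have hent : ∀ t : Fin n, (∑ m ∈ T, v m * M m t) + (if t ∈ T then 0 else v t) = 0 := by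
    intro t
    have h1 := congrFun hv t
    simp only [Matrix.vecMul, dotProduct, Pi.zero_apply] at h1
    have e1 : ∀ m : Fin n, v m * BT M T m t =
        (if m ∈ T then v m * M m t else 0)
          + (if m ∈ T then 0 else v m * (Pi.single m 1 : Fin n → K) t) := by
      intro m
      by_cases hm : m ∈ T <;> simp [BT, hm]
    rw [Finset.sum_congr rfl (fun m _ => e1 m), Finset.sum_add_distrib,
      Finset.sum_ite_mem, Finset.univ_inter] at h1
    have e2 : (∑ m : Fin n, if m ∈ T then 0 else v m * (Pi.single m 1 : Fin n → K) t)
        = (if t ∈ T then 0 else v t) := by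
      by_cases ht : t ∈ T
      · rw [if_pos ht, Finset.sum_eq_zero]
        intro m _
        by_cases hm : m ∈ T
        · simp [hm]
        · have hmt : m ≠ t := fun h => hm (h ▸ ht)
          simp [hm, Pi.single_apply, Ne.symm hmt]
      · rw [if_neg ht, Finset.sum_eq_single t]
        · simp [ht]
        · intro m _ hmt
          by_cases hm : m ∈ T
          · simp [hm]
          · simp [hm, Pi.single_apply, Ne.symm hmt]
        · simp
    rw [e2] at h1
    exact h1
  have hvT : ∀ t ∈ T, v t = 0 := by
    rcases T.eq_empty_or_nonempty with rfl | hne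
    · simp
    · intro t ht
      have hker : ¬ ∃ w : {x // x ∈ T} → K, w ≠ 0 ∧
          Matrix.vecMul w (M.submatrix (Subtype.val : {x // x ∈ T} → Fin n) (Subtype.val : {x // x ∈ T} → Fin n)) = 0 := by
        rw [Matrix.exists_vecMul_eq_zero_iff]
        exact hmin T hne
      by_contra hvt
      apply hker
      refine ⟨fun m => v m, fun h => hvt (congrFun h ⟨t, ht⟩), ?_⟩
      funext s
      simp only [Matrix.vecMul, dotProduct, Matrix.submatrix_apply, Pi.zero_apply]
      have := hent s
      rw [if_pos s.2, add_zero] at this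
      rw [← this, ← Finset.sum_coe_sort T (fun m => v m * M m s)]
  have : v = 0 := by
    funext t
    by_cases ht : t ∈ T
    · exact hvT t ht
    · have := hent t
      rw [if_neg ht, Finset.sum_eq_zero (fun m hm => by rw [hvT m hm, zero_mul]), zero_add] at this
      exact this
  exact hv0 this

lemma step {R : Type*} [CommRing R] {I : Ideal R} {a b c : R}
    (ha : ∀ g, g * a ∈ I → g ∈ I)
    (hca : ∀ g, g * c ∈ I ⊔ Ideal.span {a} → g ∈ I ⊔ Ideal.span {a})
    (hcb : ∀ g, g * c ∈ I ⊔ Ideal.span {b} → g ∈ I ⊔ Ideal.span {b}) :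
    ∀ g, g * c ∈ I ⊔ Ideal.span {a * b} → g ∈ I ⊔ Ideal.span {a * b} := by
  intro g hg
  have h1 : g ∈ I ⊔ Ideal.span {a} := by
    apply hca
    refine SetLike.le_def.mp (sup_le_sup_left ?_ I) hg
    rw [Ideal.span_singleton_le_span_singleton]
    exact Dvd.intro b rfl
  obtain ⟨x1, hx1, y, hy, hgxy⟩ := Submodule.mem_sup.1 h1
  obtain ⟨u, rfl⟩ := Ideal.mem_span_singleton'.1 hy
  obtain ⟨x, hx, z, hz, hgc⟩ := Submodule.mem_sup.1 hg
  obtain ⟨h', rfl⟩ := Ideal.mem_span_singleton'.1 hz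
  have key : u * c - h' * b ∈ I := by
    apply ha
    have e : (u * c - h' * b) * a = x - x1 * c := by linear_combination c * hgxy - hgc
    rw [e]
    exact I.sub_mem hx (I.mul_mem_right c hx1)
  have h2 : u ∈ I ⊔ Ideal.span {b} := by
    apply hcb
    refine Submodule.mem_sup.2 ⟨u * c - h' * b, key, h' * b, ?_, by ring⟩
    exact Ideal.mem_span_singleton'.2 ⟨h', rfl⟩
  obtain ⟨x2, hx2, w, hw, hu⟩ := Submodule.mem_sup.1 h2
  obtain ⟨v, rfl⟩ := Ideal.mem_span_singleton'.1 hw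
  refine Submodule.mem_sup.2 ⟨x1 + x2 * a, I.add_mem hx1 (I.mul_mem_right a hx2),
    v * (a * b), Ideal.mem_span_singleton'.2 ⟨v, rfl⟩, by linear_combination hgxy + a * hu⟩

lemma X_nzd {s : Set (Fin n)} {j : Fin n} (hj : j ∉ s) (g : MvPolynomial (Fin n) K)
    (h : g * X j ∈ Ideal.span (X '' s : Set (MvPolynomial (Fin n) K))) :
    g ∈ Ideal.span (X '' s : Set (MvPolynomial (Fin n) K)) := by
  rw [mem_ideal_span_X_image] at h ⊢
  intro d hd
  have hd' : d + Finsupp.single j 1 ∈ (g * X j).support := by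
    rw [support_mul_X]
    exact Finset.mem_map.2 ⟨d, hd, rfl⟩
  obtain ⟨k, hk, hk0⟩ := h _ hd'
  have hkj : k ≠ j := fun h => hj (h ▸ hk)
  refine ⟨k, hk, fun h0 => hk0 ?_⟩
  simp [Finsupp.add_apply, h0, Finsupp.single_apply, Ne.symm hkj]

lemma mem_span_iff_equiv (e : MvPolynomial (Fin n) K ≃ₐ[K] MvPolynomial (Fin n) K)
    (s : Set (MvPolynomial (Fin n) K)) (p : MvPolynomial (Fin n) K) :
    p ∈ Ideal.span s ↔ e p ∈ Ideal.span (⇑e '' s) := by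
  constructor
  · intro h
    have := Ideal.mem_map_of_mem (e : MvPolynomial (Fin n) K →+* MvPolynomial (Fin n) K) h
    rwa [Ideal.map_span] at this
  · intro h
    have := Ideal.mem_map_of_mem
      (e.symm : MvPolynomial (Fin n) K →+* MvPolynomial (Fin n) K) h
    rw [Ideal.map_span] at this
    simp only [RingHom.coe_coe] at this
    rw [← Set.image_comp] at this
    simpa using this

lemma sum_single_X (m : Fin n) :
    ∑ j, C ((Pi.single m 1 : Fin n → K) j) * X j = (X m : MvPolynomial (Fin n) K) := by
  rw [Finset.sum_eq_single m]
  · simp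
  · intro j _ hj
    simp [Pi.single_apply, hj]
  · simp

lemma Φ_BT_X (M : Matrix (Fin n) (Fin n) K) (T : Finset (Fin n)) (m : Fin n) :
    Φ (BT M T) (X m) = if m ∈ T then Lf M m else X m := by
  rw [Φ_X]
  by_cases hm : m ∈ T
  · rw [if_pos hm]
    refine Finset.sum_congr rfl fun j _ => ?_
    simp [BT, hm]
  · rw [if_neg hm]
    have h : ∀ j, (BT M T) m j = (Pi.single m 1 : Fin n → K) j := fun j => by simp [BT, hm]
    simp_rw [h]
    exact sum_single_X m

lemma base (M : Matrix (Fin n) (Fin n) K)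
    (hmin : ∀ J : Finset (Fin n), J.Nonempty →
      (M.submatrix (Subtype.val : {x // x ∈ J} → Fin n) Subtype.val).det ≠ 0)
    (Sy T : Finset (Fin n)) (hd : ∀ k ∈ Sy, k ∉ T)
    (u : Fin n) (huS : u ∉ Sy) (huT : u ∉ T)
    (c : MvPolynomial (Fin n) K) (hc : c = X u ∨ c = Lf M u)
    (g : MvPolynomial (Fin n) K)
    (hg : g * c ∈ Ideal.span (X '' ↑Sy ∪ Lf M '' ↑T)) :
    g ∈ Ideal.span (X '' ↑Sy ∪ Lf M '' ↑T) := by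
  classical
  have main : ∀ T' : Finset (Fin n), (∀ k ∈ Sy, k ∉ T') → T ⊆ T' →
      Φ (BT M T') (X u) = c → g ∈ Ideal.span (X '' ↑Sy ∪ Lf M '' ↑T) := by
    intro T' hd' hTT' hXu
    set φ := Ψ (BT M T') (BT_det M hmin T') with hφdef
    have hφX : ∀ m, φ (X m) = if m ∈ T' then Lf M m else X m := fun m => Φ_BT_X M T' m
    have himg : ⇑φ '' (X '' ↑(Sy ∪ T)) = X '' ↑Sy ∪ Lf M '' ↑T := by
      rw [Finset.coe_union, Set.image_union, Set.image_union, Set.image_image, Set.image_image]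
      congr 1
      · apply Set.image_congr
        intro m hm
        rw [hφX, if_neg (hd' m hm)]
      · apply Set.image_congr
        intro m hm
        rw [hφX, if_pos (hTT' hm)]
    have key := mem_span_iff_equiv φ (X '' ↑(Sy ∪ T)) (φ.symm g * X u)
    have hφg : φ (φ.symm g * X u) = g * c := by
      rw [map_mul, AlgEquiv.apply_symm_apply]
      exact congrArg (fun t => g * t) hXu
    rw [hφg, himg] at key
    have h2 : φ.symm g * X u ∈ Ideal.span (X '' (↑(Sy ∪ T) : Set (Fin n))) := key.mpr hg
    have h3 : φ.symm g ∈ Ideal.span (X '' (↑(Sy ∪ T) : Set (Fin n))) := by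
      refine X_nzd ?_ _ h2
      simp [huS, huT]
    have h4 := (mem_span_iff_equiv φ _ (φ.symm g)).mp h3
    rw [himg, AlgEquiv.apply_symm_apply] at h4
    exact h4
  rcases hc with rfl | rfl
  · refine main T hd subset_rfl ?_
    rw [Φ_BT_X, if_neg huT]
  · refine main (insert u T) ?_ (Finset.subset_insert u T) ?_
    · intro k hk
      simp only [Finset.mem_insert, not_or]
      exact ⟨fun h => huS (h ▸ hk), hd k hk⟩
    · rw [Φ_BT_X, if_pos (Finset.mem_insert_self u T)]

lemma claim (M : Matrix (Fin n) (Fin n) K)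
    (hmin : ∀ J : Finset (Fin n), J.Nonempty →
      (M.submatrix (Subtype.val : {x // x ∈ J} → Fin n) Subtype.val).det ≠ 0) :
    ∀ Q Sy SL : Finset (Fin n),
      (∀ k ∈ Q, k ∉ Sy) → (∀ k ∈ Q, k ∉ SL) → (∀ k ∈ Sy, k ∉ SL) →
      ∀ j, j ∉ Q → j ∉ Sy → j ∉ SL →
      ∀ c : MvPolynomial (Fin n) K, (c = X j ∨ c = Lf M j) →
      ∀ g, g * c ∈ Ideal.span (qf M '' ↑Q ∪ X '' ↑Sy ∪ Lf M '' ↑SL) →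
        g ∈ Ideal.span (qf M '' ↑Q ∪ X '' ↑Sy ∪ Lf M '' ↑SL) := by
  intro Q
  induction Q using Finset.induction_on with
  | empty =>
    intro Sy SL _ _ hSySL j _ hjSy hjSL c hc g hg
    simp only [Finset.coe_empty, Set.image_empty, Set.empty_union] at hg ⊢
    exact base M hmin Sy SL hSySL j hjSy hjSL c hc g hg
  | @insert k Q' hk ih =>
    intro Sy SL hQSy hQSL hSySL j hjQ hjSy hjSL c hc g hg
    have hkSy : k ∉ Sy := hQSy k (Finset.mem_insert_self k Q')
    have hkSL : k ∉ SL := hQSL k (Finset.mem_insert_self k Q')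
    have hjk : j ≠ k := fun h => hjQ (h ▸ Finset.mem_insert_self k Q')
    have hjQ' : j ∉ Q' := fun h => hjQ (Finset.mem_insert_of_mem h)
    have hQSy' : ∀ m ∈ Q', m ∉ Sy := fun m hm => hQSy m (Finset.mem_insert_of_mem hm)
    have hQSL' : ∀ m ∈ Q', m ∉ SL := fun m hm => hQSL m (Finset.mem_insert_of_mem hm)
    have e1 : qf M '' ↑(insert k Q') ∪ X '' ↑Sy ∪ Lf M '' ↑SL
        = insert (qf M k) (qf M '' ↑Q' ∪ X '' ↑Sy ∪ Lf M '' ↑SL) := by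
      rw [Finset.coe_insert, Set.image_insert_eq, Set.insert_union, Set.insert_union]
    have e2 : qf M '' ↑Q' ∪ X '' ↑(insert k Sy) ∪ Lf M '' ↑SL
        = insert (X k) (qf M '' ↑Q' ∪ X '' ↑Sy ∪ Lf M '' ↑SL) := by
      rw [Finset.coe_insert, Set.image_insert_eq, Set.union_insert, Set.insert_union]
    have e3 : qf M '' ↑Q' ∪ X '' ↑Sy ∪ Lf M '' ↑(insert k SL)
        = insert (Lf M k) (qf M '' ↑Q' ∪ X '' ↑Sy ∪ Lf M '' ↑SL) := by
      rw [Finset.coe_insert, Set.image_insert_eq, Set.union_insert]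
    set s' : Set (MvPolynomial (Fin n) K) := qf M '' ↑Q' ∪ X '' ↑Sy ∪ Lf M '' ↑SL with hs'
    have ha : ∀ g, g * X k ∈ Ideal.span s' → g ∈ Ideal.span s' :=
      ih Sy SL hQSy' hQSL' hSySL k hk hkSy hkSL (X k) (Or.inl rfl)
    have hca : ∀ g, g * c ∈ Ideal.span s' ⊔ Ideal.span {X k}
        → g ∈ Ideal.span s' ⊔ Ideal.span {X k} := by
      have hsup : Ideal.span s' ⊔ Ideal.span {X k}
          = Ideal.span (qf M '' ↑Q' ∪ X '' ↑(insert k Sy) ∪ Lf M '' ↑SL) := by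
        rw [e2, Ideal.span_insert, sup_comm]
      rw [hsup]
      refine ih (insert k Sy) SL ?_ hQSL' ?_ j hjQ' ?_ hjSL c hc
      · intro m hm
        simp only [Finset.mem_insert, not_or]
        exact ⟨fun h => hk (h ▸ hm), hQSy' m hm⟩
      · intro m hm
        rcases Finset.mem_insert.1 hm with rfl | hm'
        · exact hkSL
        · exact hSySL m hm'
      · simp only [Finset.mem_insert, not_or]
        exact ⟨hjk, hjSy⟩
    have hcb : ∀ g, g * c ∈ Ideal.span s' ⊔ Ideal.span {Lf M k}
        → g ∈ Ideal.span s' ⊔ Ideal.span {Lf M k} := by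
      have hsup : Ideal.span s' ⊔ Ideal.span {Lf M k}
          = Ideal.span (qf M '' ↑Q' ∪ X '' ↑Sy ∪ Lf M '' ↑(insert k SL)) := by
        rw [e3, Ideal.span_insert, sup_comm]
      rw [hsup]
      refine ih Sy (insert k SL) hQSy' ?_ ?_ j hjQ' hjSy ?_ c hc
      · intro m hm
        simp only [Finset.mem_insert, not_or]
        exact ⟨fun h => hk (h ▸ hm), hQSL' m hm⟩
      · intro m hm
        simp only [Finset.mem_insert, not_or]
        exact ⟨fun h => hkSy (h ▸ hm), hSySL m hm⟩
      · simp only [Finset.mem_insert, not_or]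
        exact ⟨hjk, hjSL⟩
    have hsup1 : Ideal.span (qf M '' ↑(insert k Q') ∪ X '' ↑Sy ∪ Lf M '' ↑SL)
        = Ideal.span s' ⊔ Ideal.span {X k * Lf M k} := by
      rw [e1, Ideal.span_insert, sup_comm]
      rfl
    rw [hsup1] at hg ⊢
    exact step ha hca hcb g hg

end QuadReg


/-- If all principal minors of `M` are nonzero, then the quadrics
`y_1 L_1, …, y_n L_n` (with `L_i = ∑_j M_{ij} y_j`) form a regular sequence in
`K[y_1,…,y_n]`: each `y_i L_i` is a nonzerodivisor modulo the ideal generated by the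
previous ones. -/
theorem quadrics_form_regular_sequence
    {K : Type*} [Field K] [CharZero K] {n : ℕ}
    (M : Matrix (Fin n) (Fin n) K)
    (hmin : ∀ J : Finset (Fin n), J.Nonempty →
      (M.submatrix (Subtype.val : {x // x ∈ J} → Fin n) Subtype.val).det ≠ 0) :
    ∀ i : Fin n, ∀ g : MvPolynomial (Fin n) K,
      g * (X i * ∑ j, C (M i j) * X j) ∈
        Ideal.span ((fun k : Fin n => X k * ∑ j, C (M k j) * X j) '' {k | k < i}) →
      g ∈ Ideal.span
        ((fun k : Fin n => X k * ∑ j, C (M k j) * X j) '' {k | k < i}) := by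
  classical
  intro i g hg
  set Q : Finset (Fin n) := Finset.univ.filter (fun k => k < i) with hQ
  have hset : {k : Fin n | k < i} = (↑Q : Set (Fin n)) := by
    ext k
    simp [hQ]
  have hEq : ((fun k : Fin n => X k * ∑ j, C (M k j) * X j) '' {k | k < i})
      = (QuadReg.qf M '' ↑Q ∪ X '' (↑(∅ : Finset (Fin n)) : Set (Fin n))
          ∪ QuadReg.Lf M '' (↑(∅ : Finset (Fin n)) : Set (Fin n))) := by
    simp only [Finset.coe_empty, Set.image_empty, Set.union_empty]
    rw [hset]
    rfl
  rw [hEq] at hg ⊢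
  have hiQ : i ∉ Q := by simp [hQ]
  have hne : ∀ m : Fin n, m ∉ (∅ : Finset (Fin n)) := fun m => Finset.notMem_empty m
  have hd : ∀ m ∈ Q, m ∉ (∅ : Finset (Fin n)) := fun m _ => Finset.notMem_empty m
  have hd' : ∀ m ∈ (∅ : Finset (Fin n)), m ∉ (∅ : Finset (Fin n)) :=
    fun m hm => absurd hm (Finset.notMem_empty m)
  have h1 : g * X i ∈ Ideal.span (QuadReg.qf M '' ↑Q ∪ X '' (↑(∅ : Finset (Fin n)) : Set (Fin n))
      ∪ QuadReg.Lf M '' (↑(∅ : Finset (Fin n)) : Set (Fin n))) := by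
    refine QuadReg.claim M hmin Q ∅ ∅ hd hd hd' i hiQ (hne i) (hne i)
      (QuadReg.Lf M i) (Or.inr rfl) (g * X i) ?_
    rw [mul_assoc]
    exact hg
  exact QuadReg.claim M hmin Q ∅ ∅ hd hd hd' i hiQ (hne i) (hne i)
    (X i) (Or.inl rfl) g h1
end
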